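/- For t ≥ s in [0,1], n ∈ ℕ, and N ≤ ⌊ns⌋, one has 0 ≤ E[(B^{H,n}_t)²]^N + E[(B^{H,n}_s)²]^N − 2E[B^{H,n}_t B^{H,n}_s]^N − (1/N!)E[((B^{H,n}_t)^{⋄ₙN} − (B^{H,n}_s)^{⋄ₙN})²] ≤ 2c_H² N² t^{2H(N−1)} n^{−(2−2H)}. -/

import Mathlib

open MeasureTheory ProbabilityTheory Finset
open scoped ENNReal

/-- The distribution of a symmetric ±1 Bernoulli random variable. -/
noncomputable def bernPM : Measure ℝ :=
  (1 / 2 : ℝ≥0∞) • Measure.dirac 1 + (1 / 2 : ℝ≥0∞) • Measure.dirac (-1)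

/-- The Molchan–Golosov constant `c_H`. -/
noncomputable def cH (H : ℝ) : ℝ :=
  Real.sqrt (2 * H * Real.Gamma (3 / 2 - H) / (Real.Gamma (H + 1 / 2) * Real.Gamma (2 - 2 * H)))

/-- The Walsh monomial `Ξ_A = ∏_{i∈A} ξ_i`. -/
def XiW {Ω : Type*} {n : ℕ} (ξ : Fin n → Ω → ℝ) (A : Finset (Fin n)) (ω : Ω) : ℝ :=
  ∏ i ∈ A, ξ i ω

/-- The discrete Wick product on Walsh coefficients. -/
def wickProd {n : ℕ} (x y : Finset (Fin n) → ℝ) : Finset (Fin n) → ℝ :=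
  fun C => ∑ A : Finset (Fin n), ∑ B : Finset (Fin n),
    if A ∪ B = C ∧ Disjoint A B then x A * y B else 0

/-- Iterated discrete Wick powers on Walsh coefficients. -/
def wickPowC {n : ℕ} (x : Finset (Fin n) → ℝ) : ℕ → Finset (Fin n) → ℝ
  | 0 => fun C => if C = ∅ then 1 else 0
  | k + 1 => wickProd (wickPowC x k) x

/-- Walsh coefficients of the walk `Σ_i b_i ξ_i`. -/
def singC {n : ℕ} (b : Fin n → ℝ) : Finset (Fin n) → ℝ :=
  fun C => ∑ i : Fin n, if C = {i} then b i else 0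

/-- The random walk `B^{H,n}_t(ω) = Σ_i b_i ξ_i(ω)`. -/
def walkRV {Ω : Type*} {n : ℕ} (ξ : Fin n → Ω → ℝ) (b : Fin n → ℝ) (ω : Ω) : ℝ :=
  ∑ i : Fin n, b i * ξ i ω

/-- The `k`-th discrete Wick power of the walk, as a random variable. -/
def wickPowRV {Ω : Type*} {n : ℕ} (ξ : Fin n → Ω → ℝ) (b : Fin n → ℝ) (k : ℕ) (ω : Ω) : ℝ :=
  ∑ C : Finset (Fin n), wickPowC (singC b) k C * XiW ξ C ω

/-!
Walsh orthogonality of the independent signs `ξ_i` gives `E[B_t B_s] = ∑ᵢ b_{t,i} b_{s,i}`, and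
the `N`-th discrete Wick power of a walk has Walsh coefficient `N! ∏_{i ∈ C} b_i` on each
`N`-element set `C` and `0` elsewhere. Expanding the `N`-th powers of the covariances as sums
over all maps `f : Fin N → Fin n`, the injective maps contribute exactly
`(1/N!) E[(B_t^{⋄N} - B_s^{⋄N})²]`, so the quantity in question is the sum over non-injective `f`
of `(∏ b_t ∘ f - ∏ b_s ∘ f)²`, which is nonnegative. Each term is at most `∏ b_t(f k)²`, and a
non-injective `f` has `f k = f l` for one of the `N(N-1)/2` pairs `k < l`; for a fixed pair these
terms sum to `(∑ b_t⁴)(∑ b_t²)^{N-2} ≤ max b_t² ⋅ t^{2H(N-1)}`.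
-/

lemma prod_ite_mem_pair {R : Type*} [CommMonoid R] {N : ℕ} {k l : Fin N} (hkl : k ≠ l)
    (c d : R) :
    ∏ m, (if m ∈ ({k, l} : Finset (Fin N)) then c else d) = c ^ 2 * d ^ (N - 2) := by
  rw [prod_ite, prod_const, prod_const, filter_not, filter_mem_eq_inter, univ_inter, card_sdiff,
    inter_univ, card_univ, Fintype.card_fin, card_pair hkl]

lemma sq_prod_sub_prod_le_prod_sq {α : Type*} {s : Finset α} {g g' : α → ℝ}
    (h0 : ∀ i ∈ s, 0 ≤ g' i) (hle : ∀ i ∈ s, g' i ≤ g i) :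
    (∏ i ∈ s, g i - ∏ i ∈ s, g' i) ^ 2 ≤ ∏ i ∈ s, g i ^ 2 := by
  rw [prod_pow]
  exact pow_le_pow_left₀ (sub_nonneg.2 (prod_le_prod h0 hle)) (sub_le_self _ (prod_nonneg h0)) 2

lemma cast_choose_two_mul_pow_le {K t r : ℝ} (hK : 0 ≤ K) (ht : 0 ≤ t) (N : ℕ) :
    N.choose 2 * (4 * K * (t ^ r) ^ (N - 1)) ≤ 2 * K * N ^ 2 * t ^ (r * ((N : ℝ) - 1)) := by
  rcases N with _ | N
  · simp
  rw [Nat.add_sub_cancel, ← Real.rpow_mul_natCast ht, Nat.cast_choose_two]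
  have hT := Real.rpow_nonneg ht (r * N)
  push_cast
  rw [add_sub_cancel_right]
  nlinarith [mul_nonneg (mul_nonneg hK hT) (N.cast_add_one_pos (α := ℝ)).le]

section Counting
variable {ι : Type*} [Fintype ι]

lemma sum_sq_sub_prod_comp {R : Type*} [CommRing R] (u v : ι → R) (N : ℕ) :
    ∑ f : Fin N → ι, (∏ k, u (f k) - ∏ k, v (f k)) ^ 2
      = (∑ i, u i ^ 2) ^ N + (∑ i, v i ^ 2) ^ N - 2 * (∑ i, u i * v i) ^ N := by
  rw [Fintype.sum_pow, Fintype.sum_pow, Fintype.sum_pow, ← sum_add_distrib, mul_sum,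
    ← sum_sub_distrib]
  refine sum_congr rfl fun f _ => ?_
  rw [prod_mul_distrib, prod_pow, prod_pow]
  ring

lemma sum_sq_mul_pow_le {a : ι → ℝ} (ha : ∀ i, 0 ≤ a i) {M S : ℝ} (hM0 : 0 ≤ M)
    (hM : ∀ i, a i ≤ M) (hS : ∑ i, a i ≤ S) {N : ℕ} (hN : 2 ≤ N) :
    (∑ i, a i ^ 2) * (∑ i, a i) ^ (N - 2) ≤ M * S ^ (N - 1) := by
  have hsum0 : 0 ≤ ∑ i, a i := sum_nonneg fun i _ => ha i
  have hsq : ∑ i, a i ^ 2 ≤ M * ∑ i, a i := by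
    rw [mul_sum]
    exact sum_le_sum fun i _ => by rw [sq]; exact mul_le_mul_of_nonneg_right (hM i) (ha i)
  calc (∑ i, a i ^ 2) * (∑ i, a i) ^ (N - 2) ≤ M * (∑ i, a i) * (∑ i, a i) ^ (N - 2) :=
        mul_le_mul_of_nonneg_right hsq (pow_nonneg hsum0 _)
    _ = M * (∑ i, a i) ^ (N - 1) := by
        rw [mul_assoc, ← pow_succ', show N - 2 + 1 = N - 1 by omega]
    _ ≤ M * S ^ (N - 1) := by gcongr

variable [DecidableEq ι]

lemma card_filter_injective_image_eq {N : ℕ} {C : Finset ι} (hC : C.card = N) :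
    (univ.filter fun f : Fin N → ι => Function.Injective f ∧ univ.image f = C).card
      = N.factorial := by
  calc _ = Fintype.card (Fin N ↪ C) := by
        refine (card_bij' (fun e _ k => (e k : ι))
          (fun f hf => ⟨fun k => ⟨f k, (mem_filter.1 hf).2.2 ▸ mem_image_of_mem f (mem_univ k)⟩,
            fun k l h => (mem_filter.1 hf).2.1 (congrArg Subtype.val h)⟩)
          (fun e _ => ?_) (fun _ _ => mem_univ _) (fun _ _ => rfl) (fun _ _ => rfl)).symm
        have hinj : Function.Injective fun k => (e k : ι) := Subtype.val_injective.comp e.injective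
        refine mem_filter.2 ⟨mem_univ _, hinj, eq_of_subset_of_card_le ?_ ?_⟩
        · simp [subset_iff]
        · rw [card_image_of_injective _ hinj, card_univ, Fintype.card_fin, hC]
    _ = N.factorial := by
        rw [Fintype.card_embedding_eq, Fintype.card_fin, Fintype.card_coe, hC,
          Nat.descFactorial_self]

lemma sum_injective_eq_factorial_nsmul {M : Type*} [AddCommMonoid M] (N : ℕ)
    (h : Finset ι → M) :
    ∑ f ∈ univ.filter (fun f : Fin N → ι => Function.Injective f), h (univ.image f)
      = N.factorial • ∑ C ∈ powersetCard N univ, h C := by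
  rw [← sum_fiberwise_of_maps_to (g := fun f => univ.image f) (t := powersetCard N univ)]
  · rw [smul_sum]
    refine sum_congr rfl fun C hC => ?_
    rw [sum_congr rfl fun f hf => congrArg h (mem_filter.1 hf).2, sum_const, filter_filter,
      card_filter_injective_image_eq (mem_powersetCard_univ.1 hC)]
  · intro f hf
    rw [mem_powersetCard_univ, card_image_of_injective _ (mem_filter.1 hf).2, card_univ,
      Fintype.card_fin]

lemma sum_not_injective_sq_sub_prod_eq {R : Type*} [CommRing R] (u v : ι → R) (N : ℕ) :
    ∑ f ∈ univ.filter (fun f : Fin N → ι => ¬ Function.Injective f),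
        (∏ k, u (f k) - ∏ k, v (f k)) ^ 2
      = (∑ i, u i ^ 2) ^ N + (∑ i, v i ^ 2) ^ N - 2 * (∑ i, u i * v i) ^ N
          - N.factorial • ∑ C ∈ powersetCard N univ, (∏ i ∈ C, u i - ∏ i ∈ C, v i) ^ 2 := by
  rw [← sum_sq_sub_prod_comp, ← sum_injective_eq_factorial_nsmul,
    ← sum_filter_add_sum_filter_not univ (fun f : Fin N → ι => Function.Injective f)]
  have hinj : ∀ f ∈ univ.filter (fun f : Fin N → ι => Function.Injective f),
      (∏ k, u (f k) - ∏ k, v (f k)) ^ 2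
        = (∏ i ∈ univ.image f, u i - ∏ i ∈ univ.image f, v i) ^ 2 := by
    intro f hf
    have := (mem_filter.1 hf).2
    rw [prod_image fun a _ b _ h => this h, prod_image fun a _ b _ h => this h]
  rw [sum_congr rfl hinj]
  abel

lemma sum_ite_apply_eq_apply_prod {R : Type*} [CommSemiring R] (a : ι → R) {N : ℕ} {k l : Fin N}
    (hkl : k ≠ l) :
    ∑ f : Fin N → ι, (if f k = f l then ∏ m, a (f m) else 0)
      = (∑ i, a i ^ 2) * (∑ i, a i) ^ (N - 2) := by
  -- Pinning the `k`-th and `l`-th values to a common `i` turns each summand into a product of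
  -- one-variable sums.
  set w : ι → Fin N → ι → R :=
    fun i m j => if m ∈ ({k, l} : Finset (Fin N)) → j = i then a j else 0
  have hpin (f : Fin N → ι) : (if f k = f l then ∏ m, a (f m) else 0) = ∑ i, ∏ m, w i m (f m) := by
    have hcond (i : ι) : (∀ m ∈ univ, m ∈ ({k, l} : Finset (Fin N)) → f m = i)
        ↔ f k = f l ∧ f k = i := by
      simp only [mem_univ, mem_insert, mem_singleton, forall_const, forall_eq_or_imp, forall_eq]
      constructor
      · rintro ⟨rfl, h⟩
        exact ⟨h.symm, rfl⟩
      · rintro ⟨h, rfl⟩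
        exact ⟨rfl, h.symm⟩
    simp only [w, prod_ite_zero]
    simp only [hcond, ite_and]
    split_ifs <;> simp
  have hsum_w (i : ι) (m : Fin N) :
      ∑ j, w i m j = if m ∈ ({k, l} : Finset (Fin N)) then a i else ∑ j, a j := by
    split_ifs with hm <;>
      simp only [w, hm, true_implies, false_implies, if_true, sum_ite_eq', mem_univ]
  simp_rw [hpin]
  rw [sum_comm]
  simp_rw [← Fintype.prod_sum, hsum_w, prod_ite_mem_pair hkl, ← sum_mul]

lemma sum_not_injective_prod_le {a : ι → ℝ} (ha : ∀ i, 0 ≤ a i) {M S : ℝ} (hM0 : 0 ≤ M)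
    (hM : ∀ i, a i ≤ M) (hS : ∑ i, a i ≤ S) (N : ℕ) :
    ∑ f ∈ univ.filter (fun f : Fin N → ι => ¬ Function.Injective f), ∏ m, a (f m)
      ≤ N.choose 2 * (M * S ^ (N - 1)) := by
  set pairs := univ.filter fun p : Fin N × Fin N => p.1 < p.2
  set F : (Fin N → ι) → Fin N × Fin N → ℝ := fun f p => if f p.1 = f p.2 then ∏ m, a (f m) else 0
  have hF0 (f : Fin N → ι) (p : Fin N × Fin N) : 0 ≤ F f p := by
    unfold F
    split_ifs
    exacts [prod_nonneg fun m _ => ha (f m), le_rfl]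
  have hcover : ∀ f ∈ univ.filter (fun f : Fin N → ι => ¬ Function.Injective f),
      ∏ m, a (f m) ≤ ∑ p ∈ pairs, F f p := by
    intro f hf
    obtain ⟨k, l, hfkl, hkl⟩ := Function.not_injective_iff.1 (mem_filter.1 hf).2
    obtain ⟨p, hp, hfp⟩ : ∃ p ∈ pairs, f p.1 = f p.2 := by
      rcases hkl.lt_or_gt with h | h
      exacts [⟨(k, l), mem_filter.2 ⟨mem_univ _, h⟩, hfkl⟩,
        ⟨(l, k), mem_filter.2 ⟨mem_univ _, h⟩, hfkl.symm⟩]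
    calc ∏ m, a (f m) = F f p := by simp [F, hfp]
      _ ≤ ∑ p ∈ pairs, F f p := single_le_sum (fun p _ => hF0 f p) hp
  calc _ ≤ ∑ f ∈ univ.filter (fun f : Fin N → ι => ¬ Function.Injective f),
          ∑ p ∈ pairs, F f p := sum_le_sum hcover
    _ ≤ ∑ f, ∑ p ∈ pairs, F f p := sum_le_sum_of_subset_of_nonneg (filter_subset _ _)
          fun f _ _ => sum_nonneg fun p _ => hF0 f p
    _ = ∑ p ∈ pairs, (∑ i, a i ^ 2) * (∑ i, a i) ^ (N - 2) := by
        rw [sum_comm]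
        exact sum_congr rfl fun p hp => sum_ite_apply_eq_apply_prod a (mem_filter.1 hp).2.ne
    _ ≤ ∑ _p ∈ pairs, M * S ^ (N - 1) := by
        refine sum_le_sum fun p hp => sum_sq_mul_pow_le ha hM0 hM hS ?_
        have := (mem_filter.1 hp).2
        omega
    _ = N.choose 2 * (M * S ^ (N - 1)) := by
        rw [sum_const, Fintype.card_product_filter_lt, Fintype.card_fin, nsmul_eq_mul]

end Counting

section Rademacher
variable {Ω : Type*} [MeasurableSpace Ω] {P : Measure Ω} {X : Ω → ℝ}

lemma integral_bernPM (f : ℝ → ℝ) : ∫ x, f x ∂bernPM = (f 1 + f (-1)) / 2 := by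
  have hint (a : ℝ) : Integrable f ((1 / 2 : ℝ≥0∞) • Measure.dirac a) :=
    (integrable_dirac enorm_lt_top).smul_measure (by simp)
  rw [bernPM, integral_add_measure (hint 1) (hint (-1)), integral_smul_measure,
    integral_smul_measure, integral_dirac, integral_dirac]
  simp only [one_div, ENNReal.toReal_inv, ENNReal.toReal_ofNat, smul_eq_mul]
  ring

lemma ae_eq_one_or_eq_neg_one (hX : Measurable X) (hlaw : P.map X = bernPM) :
    ∀ᵐ ω ∂P, X ω = 1 ∨ X ω = -1 := by
  have hbern : ∀ᵐ x ∂bernPM, x = 1 ∨ x = -1 := by simp [bernPM]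
  rw [← hlaw] at hbern
  exact ae_of_ae_map hX.aemeasurable hbern

lemma integral_pow_of_map_eq_bernPM (hX : Measurable X) (hlaw : P.map X = bernPM) (k : ℕ) :
    ∫ ω, X ω ^ k ∂P = if Even k then 1 else 0 := by
  rw [← integral_map (f := fun x => x ^ k) hX.aemeasurable (by fun_prop), hlaw, integral_bernPM]
  rcases Nat.even_or_odd k with hk | hk <;> simp [hk, hk.neg_one_pow, Nat.not_even_iff_odd.2]

end Rademacher

section Walsh
variable {Ω : Type*} {n : ℕ} {ξ : Fin n → Ω → ℝ}

lemma XiW_eq_prod_pow (A : Finset (Fin n)) (ω : Ω) :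
    XiW ξ A ω = ∏ i, ξ i ω ^ (if i ∈ A then 1 else 0) := by
  simp [XiW, pow_ite, prod_ite_mem]

lemma XiW_mul_XiW (A B : Finset (Fin n)) (ω : Ω) :
    XiW ξ A ω * XiW ξ B ω
      = ∏ i, ξ i ω ^ ((if i ∈ A then 1 else 0) + (if i ∈ B then 1 else 0)) := by
  simp only [XiW_eq_prod_pow, pow_add, prod_mul_distrib]

variable [MeasurableSpace Ω] {P : Measure Ω}

lemma integral_XiW_mul_XiW (hmeas : ∀ i, Measurable (ξ i)) (hindep : iIndepFun ξ P)
    (hlaw : ∀ i, P.map (ξ i) = bernPM) (A B : Finset (Fin n)) :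
    ∫ ω, XiW ξ A ω * XiW ξ B ω ∂P = if A = B then 1 else 0 := by
  simp_rw [XiW_mul_XiW]
  set e : Fin n → ℕ := fun i => (if i ∈ A then 1 else 0) + (if i ∈ B then 1 else 0)
  have hparity : (∀ i, Even (e i)) ↔ A = B := by
    rw [Finset.ext_iff]
    refine forall_congr' fun i => ?_
    by_cases hA : i ∈ A <;> by_cases hB : i ∈ B <;> simp [e, hA, hB]
  rw [hindep.integral_fun_prod_comp (f := fun i x => x ^ e i) (fun i => (hmeas i).aemeasurable)
    (fun i => by fun_prop)]
  simp_rw [integral_pow_of_map_eq_bernPM (hmeas _) (hlaw _), Fintype.prod_boole, hparity]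

lemma integrable_XiW_mul_XiW (hmeas : ∀ i, Measurable (ξ i)) (hlaw : ∀ i, P.map (ξ i) = bernPM)
    [IsFiniteMeasure P] (A B : Finset (Fin n)) :
    Integrable (fun ω => XiW ξ A ω * XiW ξ B ω) P := by
  have hmeasXi (C : Finset (Fin n)) : Measurable (XiW ξ C) :=
    measurable_prod C fun i _ => hmeas i
  refine (integrable_const (1 : ℝ)).mono' ((hmeasXi A).mul (hmeasXi B)).aestronglyMeasurable ?_
  have habs : ∀ᵐ ω ∂P, ∀ i, |ξ i ω| = 1 := ae_all_iff.2 fun i => by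
    filter_upwards [ae_eq_one_or_eq_neg_one (hmeas i) (hlaw i)] with ω hω
    rcases hω with h | h <;> simp [h]
  filter_upwards [habs] with ω hω
  simp [XiW, hω]

lemma integral_walsh_mul_walsh (hmeas : ∀ i, Measurable (ξ i))
    (hindep : iIndepFun ξ P) (hlaw : ∀ i, P.map (ξ i) = bernPM) (x y : Finset (Fin n) → ℝ) :
    ∫ ω, (∑ C, x C * XiW ξ C ω) * (∑ D, y D * XiW ξ D ω) ∂P = ∑ C, x C * y C := by
  have := hindep.isProbabilityMeasure
  simp_rw [sum_mul_sum, mul_mul_mul_comm]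
  rw [integral_finsetSum _ fun C _ => integrable_finsetSum _ fun D _ =>
    (integrable_XiW_mul_XiW hmeas hlaw C D).const_mul _]
  refine sum_congr rfl fun C _ => ?_
  rw [integral_finsetSum _ fun D _ => (integrable_XiW_mul_XiW hmeas hlaw C D).const_mul _]
  simp [integral_const_mul, integral_XiW_mul_XiW hmeas hindep hlaw]

end Walsh

section Coefficients
variable {n : ℕ}

lemma sum_singC_mul (b : Fin n → ℝ) (g : Finset (Fin n) → ℝ) :
    ∑ C, singC b C * g C = ∑ i, b i * g {i} := by
  simp only [singC, sum_mul, ite_mul, zero_mul]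
  rw [sum_comm]
  simp

lemma singC_singleton (b : Fin n → ℝ) (i : Fin n) : singC b {i} = b i := by
  simp [singC]

lemma wickProd_singC (x : Finset (Fin n) → ℝ) (b : Fin n → ℝ) (C : Finset (Fin n)) :
    wickProd x (singC b) C = ∑ j ∈ C, x (C.erase j) * b j := by
  have hsplit (A : Finset (Fin n)) (j : Fin n) :
      A ∪ {j} = C ∧ Disjoint A {j} ↔ j ∈ C ∧ A = C.erase j := by
    constructor
    · rintro ⟨rfl, hdisj⟩
      simp_all
    · rintro ⟨hj, rfl⟩
      simp [hj]
  have hB (A : Finset (Fin n)) :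
      ∑ B, (if A ∪ B = C ∧ Disjoint A B then x A * singC b B else 0)
        = ∑ j, b j * if j ∈ C ∧ A = C.erase j then x A else 0 := by
    calc ∑ B, (if A ∪ B = C ∧ Disjoint A B then x A * singC b B else 0)
        = ∑ B, singC b B * if A ∪ B = C ∧ Disjoint A B then x A else 0 := by
          simp only [mul_ite, mul_zero, mul_comm]
      _ = _ := by simp only [sum_singC_mul, hsplit]
  simp only [wickProd, hB, mul_ite, mul_zero]
  rw [sum_comm]
  simp [ite_and, sum_ite_mem, mul_comm]

lemma wickPowC_singC (b : Fin n → ℝ) (k : ℕ) (C : Finset (Fin n)) :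
    wickPowC (singC b) k C = if C.card = k then (k.factorial : ℝ) * ∏ i ∈ C, b i else 0 := by
  induction k generalizing C with
  | zero => by_cases hC : C = ∅ <;> simp [wickPowC, hC]
  | succ k ih =>
    have hterm : ∀ j ∈ C, wickPowC (singC b) k (C.erase j) * b j
        = if C.card = k + 1 then (k.factorial : ℝ) * ∏ i ∈ C, b i else 0 := by
      intro j hj
      have hcard : (C.erase j).card = k ↔ C.card = k + 1 := by
        rw [card_erase_of_mem hj]
        have := card_pos.2 ⟨j, hj⟩
        omega
      rw [ih]
      simp only [hcard]
      split_ifs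
      · rw [mul_assoc, prod_erase_mul _ _ hj]
      · rw [zero_mul]
    rw [wickPowC, wickProd_singC, sum_congr rfl hterm, sum_const]
    split_ifs with hC
    · rw [hC, nsmul_eq_mul, Nat.factorial_succ]
      push_cast
      ring
    · rw [smul_zero]

end Coefficients

section WalkAndWick
variable {Ω : Type*} [MeasurableSpace Ω] {P : Measure Ω} {n : ℕ} {ξ : Fin n → Ω → ℝ}

lemma integral_walkRV_mul_walkRV (hmeas : ∀ i, Measurable (ξ i)) (hindep : iIndepFun ξ P)
    (hlaw : ∀ i, P.map (ξ i) = bernPM) (b b' : Fin n → ℝ) :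
    ∫ ω, walkRV ξ b ω * walkRV ξ b' ω ∂P = ∑ i, b i * b' i := by
  have hrepr (c : Fin n → ℝ) (ω : Ω) : walkRV ξ c ω = ∑ C, singC c C * XiW ξ C ω := by
    simp [walkRV, sum_singC_mul, XiW]
  simp_rw [hrepr, integral_walsh_mul_walsh hmeas hindep hlaw, sum_singC_mul, singC_singleton]

lemma integral_sq_wickPowRV_sub_wickPowRV (hmeas : ∀ i, Measurable (ξ i))
    (hindep : iIndepFun ξ P) (hlaw : ∀ i, P.map (ξ i) = bernPM) (b b' : Fin n → ℝ) (N : ℕ) :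
    ∫ ω, (wickPowRV ξ b N ω - wickPowRV ξ b' N ω) ^ 2 ∂P
      = (N.factorial : ℝ) ^ 2 *
          ∑ C ∈ powersetCard N univ, (∏ i ∈ C, b i - ∏ i ∈ C, b' i) ^ 2 := by
  have hrepr (ω : Ω) : wickPowRV ξ b N ω - wickPowRV ξ b' N ω
      = ∑ C, (wickPowC (singC b) N C - wickPowC (singC b') N C) * XiW ξ C ω := by
    simp [wickPowRV, sub_mul]
  simp_rw [sq, hrepr, integral_walsh_mul_walsh hmeas hindep hlaw, wickPowC_singC]
  rw [mul_sum, powersetCard_eq_filter, sum_filter]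
  refine sum_congr rfl fun C _ => ?_
  split_ifs <;> ring

lemma covariance_pow_sub_wick_eq_sum_not_injective (hmeas : ∀ i, Measurable (ξ i))
    (hindep : iIndepFun ξ P) (hlaw : ∀ i, P.map (ξ i) = bernPM) (b b' : Fin n → ℝ) (N : ℕ) :
    (∫ ω, (walkRV ξ b ω) ^ 2 ∂P) ^ N + (∫ ω, (walkRV ξ b' ω) ^ 2 ∂P) ^ N
        - 2 * (∫ ω, walkRV ξ b ω * walkRV ξ b' ω ∂P) ^ N
        - (1 / (N.factorial : ℝ)) * ∫ ω, (wickPowRV ξ b N ω - wickPowRV ξ b' N ω) ^ 2 ∂P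
      = ∑ f ∈ univ.filter (fun f : Fin N → Fin n => ¬ Function.Injective f),
          (∏ k, b (f k) - ∏ k, b' (f k)) ^ 2 := by
  simp_rw [sq (walkRV _ _ _), integral_walkRV_mul_walkRV hmeas hindep hlaw,
    integral_sq_wickPowRV_sub_wickPowRV hmeas hindep hlaw, sum_not_injective_sq_sub_prod_eq,
    nsmul_eq_mul, ← sq]
  field_simp

end WalkAndWick

theorem stmt14_general {Ω : Type*} [MeasurableSpace Ω] (P : Measure Ω)
    (H : ℝ) (n : ℕ)
    (ξ : Fin n → Ω → ℝ) (hmeas : ∀ i, Measurable (ξ i))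
    (hindep : iIndepFun ξ P)
    (hdist : ∀ i, Measure.map (ξ i) P = bernPM)
    (t : ℝ) (ht : t ∈ Set.Icc (0 : ℝ) 1)
    (bt bs : Fin n → ℝ)
    (hpos : ∀ i, 0 ≤ bs i) (hmono : ∀ i, bs i ≤ bt i)
    (hbd : ∀ i, bt i ≤ 2 * cH H * (n : ℝ) ^ (-(1 - H)))
    (het : ∑ i : Fin n, (bt i) ^ 2 ≤ t ^ (2 * H))
    (N : ℕ) :
    0 ≤ (∫ ω, (walkRV ξ bt ω) ^ 2 ∂P) ^ N + (∫ ω, (walkRV ξ bs ω) ^ 2 ∂P) ^ N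
          - 2 * (∫ ω, walkRV ξ bt ω * walkRV ξ bs ω ∂P) ^ N
          - (1 / (N.factorial : ℝ)) *
              ∫ ω, (wickPowRV ξ bt N ω - wickPowRV ξ bs N ω) ^ 2 ∂P
    ∧ (∫ ω, (walkRV ξ bt ω) ^ 2 ∂P) ^ N + (∫ ω, (walkRV ξ bs ω) ^ 2 ∂P) ^ N
          - 2 * (∫ ω, walkRV ξ bt ω * walkRV ξ bs ω ∂P) ^ N
          - (1 / (N.factorial : ℝ)) *
              ∫ ω, (wickPowRV ξ bt N ω - wickPowRV ξ bs N ω) ^ 2 ∂P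
        ≤ 2 * (cH H) ^ 2 * (N : ℝ) ^ 2 * t ^ (2 * H * ((N : ℝ) - 1)) *
            (n : ℝ) ^ (-(2 - 2 * H)) := by
  rw [covariance_pow_sub_wick_eq_sum_not_injective hmeas hindep hdist]
  refine ⟨sum_nonneg fun f _ => sq_nonneg _, ?_⟩
  set c := 2 * cH H * (n : ℝ) ^ (-(1 - H))
  have hc2 : c ^ 2 = 4 * (cH H ^ 2 * (n : ℝ) ^ (-(2 - 2 * H))) := by
    rw [mul_pow, ← Real.rpow_natCast ((n : ℝ) ^ _), ← Real.rpow_mul n.cast_nonneg]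
    ring_nf
  calc _ ≤ ∑ f ∈ univ.filter (fun f : Fin N → Fin n => ¬ Function.Injective f),
          ∏ k, bt (f k) ^ 2 :=
        sum_le_sum fun f _ => sq_prod_sub_prod_le_prod_sq (fun k _ => hpos _) fun k _ => hmono _
    _ ≤ N.choose 2 * (c ^ 2 * (t ^ (2 * H)) ^ (N - 1)) :=
        sum_not_injective_prod_le (fun i => sq_nonneg _) (sq_nonneg c)
          (fun i => pow_le_pow_left₀ ((hpos i).trans (hmono i)) (hbd i) 2) het N
    _ ≤ 2 * (cH H ^ 2 * (n : ℝ) ^ (-(2 - 2 * H))) * N ^ 2 * t ^ (2 * H * ((N : ℝ) - 1)) := by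
        rw [hc2]
        exact cast_choose_two_mul_pow_le (by positivity) ht.1 N
    _ = _ := by ring

/-- The `L²` sandwich for differences of discrete Wick powers: for `s ≤ t` in `[0,1]`
and `N ≤ ⌊ns⌋`,
`0 ≤ E[(B^{H,n}_t)²]^N + E[(B^{H,n}_s)²]^N − 2E[B^{H,n}_t B^{H,n}_s]^N
   − (1/N!)E[((B^{H,n}_t)^{⋄ₙN} − (B^{H,n}_s)^{⋄ₙN})²] ≤ 2c_H² N² t^{2H(N−1)} n^{−(2−2H)}`. -/
theorem stmt14 {Ω : Type*} [MeasurableSpace Ω] (P : Measure Ω) [IsProbabilityMeasure P]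
    (H : ℝ) (hH : H ∈ Set.Ioo (1 / 2 : ℝ) 1) (n : ℕ) (hn : 1 ≤ n)
    (ξ : Fin n → Ω → ℝ) (hmeas : ∀ i, Measurable (ξ i))
    (hindep : iIndepFun ξ P)
    (hdist : ∀ i, Measure.map (ξ i) P = bernPM)
    (s t : ℝ) (hs : s ∈ Set.Icc (0 : ℝ) 1) (ht : t ∈ Set.Icc (0 : ℝ) 1) (hst : s ≤ t)
    (bt bs : Fin n → ℝ)
    (hpos : ∀ i, 0 ≤ bs i) (hmono : ∀ i, bs i ≤ bt i)
    (hbd : ∀ i, bt i ≤ 2 * cH H * (n : ℝ) ^ (-(1 - H)))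
    (het : ∑ i : Fin n, (bt i) ^ 2 ≤ t ^ (2 * H))
    (hsupps : ∀ i : Fin n, ⌊(n : ℝ) * s⌋₊ ≤ (i : ℕ) → bs i = 0)
    (hsuppt : ∀ i : Fin n, ⌊(n : ℝ) * t⌋₊ ≤ (i : ℕ) → bt i = 0)
    (N : ℕ) (hN : N ≤ ⌊(n : ℝ) * s⌋₊) :
    0 ≤ (∫ ω, (walkRV ξ bt ω) ^ 2 ∂P) ^ N + (∫ ω, (walkRV ξ bs ω) ^ 2 ∂P) ^ N
          - 2 * (∫ ω, walkRV ξ bt ω * walkRV ξ bs ω ∂P) ^ N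
          - (1 / (N.factorial : ℝ)) *
              ∫ ω, (wickPowRV ξ bt N ω - wickPowRV ξ bs N ω) ^ 2 ∂P
    ∧ (∫ ω, (walkRV ξ bt ω) ^ 2 ∂P) ^ N + (∫ ω, (walkRV ξ bs ω) ^ 2 ∂P) ^ N
          - 2 * (∫ ω, walkRV ξ bt ω * walkRV ξ bs ω ∂P) ^ N
          - (1 / (N.factorial : ℝ)) *
              ∫ ω, (wickPowRV ξ bt N ω - wickPowRV ξ bs N ω) ^ 2 ∂P
        ≤ 2 * (cH H) ^ 2 * (N : ℝ) ^ 2 * t ^ (2 * H * ((N : ℝ) - 1)) *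
            (n : ℝ) ^ (-(2 - 2 * H)) :=
  stmt14_general P H n ξ hmeas hindep hdist t ht bt bs hpos hmono hbd het N
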